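/- arXiv:math/0409462 — 3 statements merged into one kernel-verified Lean document; each statement's English description precedes it below -/
import Mathlib

section
/- Let p0, p1, p2 ∈ R_{d1,d2} with d1, d2 > 0 be bihomogeneous polynomials with no common zeros on P^1 × P^1. Then the Koszul complex of p0, p1, p2 is not exact: there exists a triple (A0, A1, A2) ∈ R^3 with A0 p0 + A1 p1 + A2 p2 = 0 that does not lie in the Koszul submodule; in particular, p0, p1, p2 is not a regular sequence in R. -/
open MvPolynomial

noncomputable section

/-- The bigraded polynomial ring `R = k[x,y,z,w]`; variables `0,1,2,3` are `x,y,z,w`. -/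
abbrev Rk (k : Type*) [Field k] := MvPolynomial (Fin 4) k

/-- The bigrading: `x, y` have degree `(1,0)`; `z, w` have degree `(0,1)`. -/
def bidegWt : Fin 4 → ℤ × ℤ := ![(1, 0), (1, 0), (0, 1), (0, 1)]

/-- `p` is bihomogeneous of bidegree `(m, n)` (with the convention that only the zero
polynomial is bihomogeneous of a bidegree with a negative coordinate). -/
def Bihom {k : Type*} [Field k] (p : Rk k) (m n : ℤ) : Prop :=
  p.IsWeightedHomogeneous bidegWt (m, n)

/-- `p0, p1, p2` have no common zeros on `ℙ¹ × ℙ¹`. -/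
def NoCommonZeros {k : Type*} [Field k] (p0 p1 p2 : Rk k) : Prop :=
  ∀ a b c d : k, (a, b) ≠ (0, 0) → (c, d) ≠ (0, 0) →
    eval ![a, b, c, d] p0 ≠ 0 ∨ eval ![a, b, c, d] p1 ≠ 0 ∨ eval ![a, b, c, d] p2 ≠ 0

/-- The map `(A0, A1, A2) ↦ A0 p0 + A1 p1 + A2 p2`, as a `k`-linear map on `R³`. -/
def syzMapk {k : Type*} [Field k] (p : Fin 3 → Rk k) : (Fin 3 → Rk k) →ₗ[k] Rk k :=
  ∑ i : Fin 3, (LinearMap.mulRight k (p i)).comp (LinearMap.proj i)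

/-- The bigraded piece `Syz(p)_{m,n}`: triples `(A0, A1, A2)` of bihomogeneous polynomials of
bidegree `(m-2, n-1)` with `A0 p0 + A1 p1 + A2 p2 = 0`, as a `k`-subspace of `R³`. -/
def SyzPiece {k : Type*} [Field k] (p : Fin 3 → Rk k) (m n : ℤ) :
    Submodule k (Fin 3 → Rk k) :=
  (Submodule.pi Set.univ fun _ => weightedHomogeneousSubmodule k bidegWt (m - 2, n - 1)) ⊓
    LinearMap.ker (syzMapk p)

/-- The syzygy module `Syz(p)`, as an `R`-submodule of `R³`. -/
def Syz {k : Type*} [Field k] (p : Fin 3 → Rk k) : Submodule (Rk k) (Fin 3 → Rk k) :=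
  LinearMap.ker (∑ i : Fin 3, (LinearMap.mulRight (Rk k) (p i)).comp (LinearMap.proj i))

/-- The Koszul submodule of `R³`: the `R`-submodule generated by the three Koszul syzygies
`(p1, −p0, 0)`, `(p2, 0, −p0)`, `(0, p2, −p1)`. -/
def KoszulSub {k : Type*} [Field k] (p0 p1 p2 : Rk k) : Submodule (Rk k) (Fin 3 → Rk k) :=
  Submodule.span (Rk k) {![p1, -p0, 0], ![p2, 0, -p0], ![0, p2, -p1]}

/-- `p0, p1, p2 ∈ R_{2,1}` are generic: only finitely many points `[a0 : a1 : a2]` of `ℙ²(k)`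
are such that `a0 p0 + a1 p1 + a2 p2` factors as `q · l` with `q ∈ R_{2,0}`, `l ∈ R_{0,1}`. -/
def BidegGeneric {k : Type*} [Field k] (p0 p1 p2 : Rk k) : Prop :=
  {P : Projectivization k (Fin 3 → k) |
    ∃ q l : Rk k, Bihom q 2 0 ∧ Bihom l 0 1 ∧
      P.rep 0 • p0 + P.rep 1 • p1 + P.rep 2 • p2 = q * l}.Finite

/-!
The pieces `R_{m,n}` have dimension `(m+1)(n+1)`. In bidegree `(2d₁-2, 2d₂)` the syzygies are the
kernel of `R_{2d₁-2,2d₂}³ → R_{3d₁-2,3d₂}`, so they form a space of dimension at least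
`3(2d₁-1)(2d₂+1) - (3d₁-1)(3d₂+1)`. A Koszul syzygy of that bidegree is a combination of the three
Koszul vectors whose coefficients may be projected to bidegree `(d₁-2, d₂)`, so the Koszul syzygies
there have dimension at most `3(d₁-1)(d₂+1)`, exactly one less. Hence some syzygy is not Koszul.
For a regular sequence every syzygy is Koszul (divide out `p₂`, then `p₁`, then `p₀`), so
`p₀, p₁, p₂` is not regular.
-/

open Module

def koszulVectors {R : Type*} [CommRing R] (a b c : R) : Fin 3 → Fin 3 → R :=
  ![![b, -a, 0], ![c, 0, -a], ![0, c, -b]]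

namespace MvPolynomial

variable {σ M : Type*} [AddCancelCommMonoid M]

theorem weightedHomogeneousComponent_mul_of_isWeightedHomogeneous {R : Type*} [CommSemiring R]
    {w : σ → M} {q : MvPolynomial σ R} {δ : M}
    (hq : q.IsWeightedHomogeneous w δ) (c : MvPolynomial σ R) (τ : M) :
    weightedHomogeneousComponent w (τ + δ) (c * q) = weightedHomogeneousComponent w τ c * q := by
  classical
  let := weightedGradedAlgebra R w
  simp only [← weightedDecomposition.decompose'_apply]
  exact DirectSum.coe_decompose_mul_add_of_right_mem _ hq

theorem exists_isWeightedHomogeneous_of_mem_span_range {R ι κ : Type*} [CommSemiring R]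
    [Fintype ι] {w : σ → M} {K : ι → κ → MvPolynomial σ R} {δ τ : M}
    (hK : ∀ i j, (K i j).IsWeightedHomogeneous w δ)
    {A : κ → MvPolynomial σ R} (hA : ∀ j, (A j).IsWeightedHomogeneous w (τ + δ))
    (hmem : A ∈ Submodule.span (MvPolynomial σ R) (Set.range K)) :
    ∃ c : ι → MvPolynomial σ R, (∀ i, (c i).IsWeightedHomogeneous w τ) ∧ ∑ i, c i • K i = A := by
  obtain ⟨c, rfl⟩ := (Submodule.mem_span_range_iff_exists_fun _).mp hmem
  refine ⟨fun i => weightedHomogeneousComponent w τ (c i),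
    fun i => weightedHomogeneousComponent_isWeightedHomogeneous _ _, ?_⟩
  ext1 j
  rw [← (hA j).weightedHomogeneousComponent_same]
  simp [Finset.sum_apply, map_sum,
    weightedHomogeneousComponent_mul_of_isWeightedHomogeneous (hK _ j)]

lemma isWeightedHomogeneous_koszulVectors {R : Type*} [CommRing R] {w : σ → M} {δ : M}
    {p0 p1 p2 : MvPolynomial σ R} (h0 : p0.IsWeightedHomogeneous w δ)
    (h1 : p1.IsWeightedHomogeneous w δ) (h2 : p2.IsWeightedHomogeneous w δ) (i j : Fin 3) :
    (koszulVectors p0 p1 p2 i j).IsWeightedHomogeneous w δ := by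
  fin_cases i <;> fin_cases j <;>
    simp [koszulVectors, h1, h2, h0.neg, h1.neg, isWeightedHomogeneous_zero]

end MvPolynomial

theorem LinearMap.exists_map_eq_zero_notMem_range {K V W X Y : Type*} [Field K]
    [AddCommGroup V] [Module K V] [AddCommGroup W] [Module K W] [AddCommGroup X] [Module K X]
    [AddCommGroup Y] [Module K Y] [FiniteDimensional K V] [FiniteDimensional K X]
    (f : V →ₗ[K] W) {e : V →ₗ[K] Y} (he : Function.Injective e) (g : X →ₗ[K] Y)
    (h : finrank K (range f) + finrank K X < finrank K V) : ∃ v, f v = 0 ∧ e v ∉ range g := by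
  by_contra! H
  have hle : (ker f).map e ≤ range g := by
    rintro _ ⟨v, hv, rfl⟩
    exact H v hv
  have hker : finrank K (ker f) ≤ finrank K X :=
    calc finrank K (ker f) = finrank K ((ker f).map e) :=
          (Submodule.equivMapOfInjective e he (ker f)).finrank_eq
      _ ≤ finrank K (range g) := Submodule.finrank_mono hle
      _ ≤ finrank K X := g.finrank_range_le
  have := f.finrank_range_add_finrank_ker
  omega

lemma RingTheory.Sequence.IsWeaklyRegular.mem_ofList_take_of_mul_mem {R : Type*} [CommRing R]
    {rs : List R} (h : IsWeaklyRegular R rs) {i : ℕ} (hi : i < rs.length) {r : R}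
    (hr : r * rs[i] ∈ Ideal.ofList (rs.take i)) : r ∈ Ideal.ofList (rs.take i) := by
  have hreg := h.regular_mod_prev i hi
  rw [smul_eq_mul, Ideal.mul_top] at hreg
  exact mem_of_isSMulRegular_quotient_of_smul_mem hreg (by rwa [smul_eq_mul, mul_comm])

theorem RingTheory.Sequence.IsWeaklyRegular.mem_span_koszulVectors {R : Type*} [CommRing R]
    {a b c : R} (h : IsWeaklyRegular R [a, b, c]) {A : Fin 3 → R}
    (hA : A 0 * a + A 1 * b + A 2 * c = 0) :
    A ∈ Submodule.span R (Set.range (koszulVectors a b c)) := by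
  have h2 : A 2 * c ∈ Ideal.ofList [a, b] → A 2 ∈ Ideal.ofList [a, b] :=
    h.mem_ofList_take_of_mul_mem (i := 2) (by simp)
  rw [Ideal.ofList_cons, Ideal.ofList_singleton, ← Ideal.span_insert, Ideal.mem_span_pair,
    Ideal.mem_span_pair] at h2
  obtain ⟨u, v, huv⟩ := h2 ⟨-A 0, -A 1, by linear_combination -hA⟩
  have h1 : (A 1 + v * c) * b ∈ Ideal.ofList [a] → A 1 + v * c ∈ Ideal.ofList [a] :=
    h.mem_ofList_take_of_mul_mem (i := 1) (by simp)
  rw [Ideal.ofList_singleton, Ideal.mem_span_singleton', Ideal.mem_span_singleton'] at h1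
  obtain ⟨t, ht⟩ := h1 ⟨-(A 0 + u * c), by linear_combination -hA - c * huv⟩
  have h0 :
      (A 0 + u * c + t * b) * a ∈ Ideal.ofList [] → A 0 + u * c + t * b ∈ Ideal.ofList [] :=
    h.mem_ofList_take_of_mul_mem (i := 0) (by simp)
  rw [Ideal.ofList_nil, Ideal.mem_bot, Ideal.mem_bot] at h0
  have hs := h0 (by linear_combination hA + c * huv + b * ht)
  have e0 : A 0 = -t * b + -u * c := by linear_combination hs
  have e1 : A 1 = -t * -a + -v * c := by linear_combination -ht
  have e2 : A 2 = -u * -a + -v * -b := by linear_combination -huv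
  refine (Submodule.mem_span_range_iff_exists_fun R).mpr ⟨![-t, -u, -v], ?_⟩
  ext j
  fin_cases j <;> simp [koszulVectors, Fin.sum_univ_three, e0, e1, e2]

section Bigraded

open Finset.HasAntidiagonal

variable {k : Type*} [Field k]

/-- The paper's `R_{m,n}`. -/
abbrev bidegPiece (k : Type*) [Field k] (m n : ℤ) : Submodule k (Rk k) :=
  weightedHomogeneousSubmodule k bidegWt (m, n)

lemma weight_bidegWt (d : Fin 4 →₀ ℕ) :
    Finsupp.weight bidegWt d = (((d 0 + d 1 : ℕ) : ℤ), ((d 2 + d 3 : ℕ) : ℤ)) := by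
  simp [Finsupp.weight_apply, Finsupp.sum_fintype, Fin.sum_univ_four, bidegWt, Prod.ext_iff]

def bidegExponentsEquiv (m n : ℕ) :
    {d : Fin 4 →₀ ℕ | Finsupp.weight bidegWt d = ((m : ℤ), (n : ℤ))} ≃
      antidiagonal m × antidiagonal n where
  toFun d := by
    have hd := d.2
    simp only [Set.mem_ofPred_eq, weight_bidegWt, Prod.mk.injEq, Nat.cast_inj] at hd
    exact (⟨(d.1 0, d.1 1), mem_antidiagonal.mpr hd.1⟩,
      ⟨(d.1 2, d.1 3), mem_antidiagonal.mpr hd.2⟩)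
  invFun q := ⟨Finsupp.equivFunOnFinite.symm ![q.1.1.1, q.1.1.2, q.2.1.1, q.2.1.2], by
    simp only [Set.mem_ofPred_eq, weight_bidegWt, Prod.mk.injEq, Nat.cast_inj]
    exact ⟨mem_antidiagonal.mp q.1.2, mem_antidiagonal.mp q.2.2⟩⟩
  left_inv d := by
    ext i
    fin_cases i <;> rfl
  right_inv q := rfl

def bidegPieceEquiv (m n : ℕ) :
    bidegPiece k m n ≃ₗ[k] (antidiagonal m × antidiagonal n →₀ k) :=
  (LinearEquiv.ofEq _ _ (weightedHomogeneousSubmodule_eq_finsupp_supported _ _ _)).trans <|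
    (AddMonoidAlgebra.supportedEquivFinsupp _).trans
      (Finsupp.domLCongr (bidegExponentsEquiv m n))

lemma bidegPiece_eq_bot {m n : ℤ} (h : m < 0 ∨ n < 0) : bidegPiece k m n = ⊥ := by
  refine eq_bot_iff.mpr fun p hp => (Submodule.mem_bot k).mpr ?_
  ext d
  by_contra hd
  have hw := hp hd
  rw [weight_bidegWt, Prod.mk.injEq] at hw
  omega

instance (m n : ℤ) : Module.Finite k (bidegPiece k m n) := by
  by_cases h : m < 0 ∨ n < 0
  · rw [bidegPiece_eq_bot h]
    infer_instance
  · push Not at h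
    lift m to ℕ using h.1
    lift n to ℕ using h.2
    exact Module.Finite.equiv (bidegPieceEquiv m n).symm

theorem finrank_bidegPiece (m n : ℤ) :
    finrank k (bidegPiece k m n) = (m + 1).toNat * (n + 1).toNat := by
  by_cases h : m < 0 ∨ n < 0
  · rw [bidegPiece_eq_bot h, finrank_bot]
    simp only [zero_eq_mul, Int.toNat_eq_zero]
    omega
  · push Not at h
    lift m to ℕ using h.1
    lift n to ℕ using h.2
    rw [(bidegPieceEquiv m n).finrank_eq]
    simp

theorem finrank_bidegPiece_add_three_mul_lt {d1 d2 : ℤ} (hd1 : 0 < d1) (hd2 : 0 < d2) :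
    finrank k (bidegPiece k (3 * d1 - 2) (3 * d2)) + 3 * finrank k (bidegPiece k (d1 - 2) d2) <
      3 * finrank k (bidegPiece k (2 * d1 - 2) (2 * d2)) := by
  simp only [finrank_bidegPiece]
  zify
  simp (disch := omega) only [Int.toNat_of_nonneg]
  linarith

@[simp]
lemma syzMapk_apply (p A : Fin 3 → Rk k) : syzMapk p A = ∑ i, A i * p i := by
  simp [syzMapk]

lemma syzMapk_mem_bidegPiece {p A : Fin 3 → Rk k} {m n d1 d2 : ℤ}
    (hp : ∀ i, Bihom (p i) d1 d2) (hA : ∀ i, A i ∈ bidegPiece k m n) :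
    syzMapk p A ∈ bidegPiece k (m + d1) (n + d2) := by
  rw [syzMapk_apply]
  exact Submodule.sum_mem _ fun i _ => (hA i).mul (hp i)

lemma koszulSub_eq_span_koszulVectors (p0 p1 p2 : Rk k) :
    KoszulSub p0 p1 p2 = Submodule.span (Rk k) (Set.range (koszulVectors p0 p1 p2)) := by
  rw [KoszulSub, koszulVectors, Matrix.range_cons, Matrix.range_cons_cons_empty,
    Set.singleton_union]

theorem exists_syzygy_notMem_koszulSub {d1 d2 : ℤ} (hd1 : 0 < d1) (hd2 : 0 < d2)
    {p0 p1 p2 : Rk k} (h0 : Bihom p0 d1 d2) (h1 : Bihom p1 d1 d2) (h2 : Bihom p2 d1 d2) :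
    ∃ A : Fin 3 → Rk k, A 0 * p0 + A 1 * p1 + A 2 * p2 = 0 ∧ A ∉ KoszulSub p0 p1 p2 := by
  let G := bidegPiece k (d1 - 2) d2
  let U := bidegPiece k (2 * d1 - 2) (2 * d2)
  let inclU : (Fin 3 → U) →ₗ[k] (Fin 3 → Rk k) := LinearMap.pi fun i => U.subtype ∘ₗ .proj i
  let inclG : (Fin 3 → G) →ₗ[k] (Fin 3 → Rk k) := LinearMap.pi fun i => G.subtype ∘ₗ .proj i
  let koszul : (Fin 3 → G) →ₗ[k] (Fin 3 → Rk k) :=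
    (Fintype.linearCombination (Rk k) (koszulVectors p0 p1 p2)).restrictScalars k ∘ₗ inclG
  have hrange : LinearMap.range (syzMapk ![p0, p1, p2] ∘ₗ inclU) ≤
      bidegPiece k (3 * d1 - 2) (3 * d2) := by
    rintro _ ⟨A, rfl⟩
    have h := syzMapk_mem_bidegPiece (p := ![p0, p1, p2]) (fun i => by fin_cases i <;> assumption)
      (fun i => (A i).2)
    rwa [show 2 * d1 - 2 + d1 = 3 * d1 - 2 by ring, show 2 * d2 + d2 = 3 * d2 by ring] at h
  have hcount : finrank k (LinearMap.range (syzMapk ![p0, p1, p2] ∘ₗ inclU)) +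
      finrank k (Fin 3 → G) < finrank k (Fin 3 → U) := by
    have hV := Submodule.finrank_mono hrange
    have := finrank_bidegPiece_add_three_mul_lt (k := k) hd1 hd2
    simp only [G, U, finrank_pi_fintype, Finset.sum_const, Finset.card_univ, Fintype.card_fin,
      smul_eq_mul]
    omega
  obtain ⟨A, hA, hAK⟩ := (syzMapk ![p0, p1, p2] ∘ₗ inclU).exists_map_eq_zero_notMem_range
    (e := inclU) (fun A B h => funext fun i => Subtype.ext (congrFun h i)) koszul hcount
  refine ⟨inclU A, by simpa [Fin.sum_univ_three] using hA, fun hmem => hAK ?_⟩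
  rw [koszulSub_eq_span_koszulVectors] at hmem
  obtain ⟨c, hc, hcA⟩ := exists_isWeightedHomogeneous_of_mem_span_range
    (isWeightedHomogeneous_koszulVectors h0 h1 h2) (τ := (d1 - 2, d2)) (fun j => by
      rw [Prod.mk_add_mk, show d1 - 2 + d1 = 2 * d1 - 2 by ring, show d2 + d2 = 2 * d2 by ring]
      exact (A j).2) hmem
  exact ⟨fun i => ⟨c i, hc i⟩,
    by simpa [koszul, inclG, Fintype.linearCombination_apply] using hcA⟩

end Bigraded

theorem statement1_general {k : Type*} [Field k] (d1 d2 : ℤ)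
    (hd1 : 0 < d1) (hd2 : 0 < d2) (p0 p1 p2 : Rk k)
    (h0 : Bihom p0 d1 d2) (h1 : Bihom p1 d1 d2) (h2 : Bihom p2 d1 d2) :
    (∃ A : Fin 3 → Rk k, A 0 * p0 + A 1 * p1 + A 2 * p2 = 0 ∧ A ∉ KoszulSub p0 p1 p2) ∧
      ¬ RingTheory.Sequence.IsRegular (Rk k) [p0, p1, p2] := by
  obtain ⟨A, hA, hAK⟩ := exists_syzygy_notMem_koszulSub hd1 hd2 h0 h1 h2
  refine ⟨⟨A, hA, hAK⟩, fun hreg => hAK ?_⟩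
  rw [koszulSub_eq_span_koszulVectors]
  exact hreg.toIsWeaklyRegular.mem_span_koszulVectors hA

/-- If `p0, p1, p2 ∈ R_{d1,d2}` with `d1, d2 > 0` have no common zeros on
`ℙ¹ × ℙ¹`, then the Koszul complex is not exact: there is a syzygy on `p0, p1, p2` not in
the Koszul submodule; in particular `p0, p1, p2` is not a regular sequence in `R`. -/
theorem statement1 {k : Type*} [Field k] [IsAlgClosed k] (d1 d2 : ℤ)
    (hd1 : 0 < d1) (hd2 : 0 < d2) (p0 p1 p2 : Rk k)
    (h0 : Bihom p0 d1 d2) (h1 : Bihom p1 d1 d2) (h2 : Bihom p2 d1 d2)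
    (hncz : NoCommonZeros p0 p1 p2) :
    (∃ A : Fin 3 → Rk k, A 0 * p0 + A 1 * p1 + A 2 * p2 = 0 ∧ A ∉ KoszulSub p0 p1 p2) ∧
      ¬ RingTheory.Sequence.IsRegular (Rk k) [p0, p1, p2] :=
  statement1_general d1 d2 hd1 hd2 p0 p1 p2 h0 h1 h2
end
end

section
/- Let p0, p1, p2 ∈ R_{2,1} have no common zeros on P^1 × P^1. Then any two k-linearly independent elements q1, q2 of the k-linear span of {p0, p1, p2} have no common non-constant factor: every r ∈ R dividing both q1 and q2 is a unit (a nonzero constant). In particular, any two such elements form a regular sequence in R. -/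
open MvPolynomial

noncomputable section

/-!
A common factor `r` of `q1, q2 ∈ R_{2,1}` is bihomogeneous of some bidegree `(i, j) ≤ (2, 1)`,
and a nonzero constant if `(i, j) = (0, 0)`. Otherwise `r` and every `q ∈ R_{2,1}` have a common
zero on `ℙ¹ × ℙ¹`: over an algebraically closed field this reduces to a zero of a binary form,
namely `r(x, y, 0, 0)` if `j = 0` and `r(x, y, 1, 0) q(x, y, 0, 1) - r(x, y, 0, 1) q(x, y, 1, 0)`
if `j = 1`. Choosing for `q` one of the `pᵢ` that completes `q1, q2` to a spanning set of
`span {p0, p1, p2}` produces a common zero of all the `pᵢ`.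

Two coprime elements of a UFD that generate a proper ideal form a regular sequence, and `q1, q2`
vanish at the origin.
-/

namespace MvPolynomial

section WeightedHomogeneous

variable {σ R M : Type*} [CommRing R] [AddCommMonoid M] {w : σ → M}

theorem weightedHomogeneousComponent_add_mul {φ ψ : MvPolynomial σ R} {a b : M}
    (h : ∀ u ∈ φ.support, ∀ v ∈ ψ.support, Finsupp.weight w u + Finsupp.weight w v = a + b →
      Finsupp.weight w u = a ∧ Finsupp.weight w v = b) :
    weightedHomogeneousComponent w (a + b) (φ * ψ) =
      weightedHomogeneousComponent w a φ * weightedHomogeneousComponent w b ψ := by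
  classical
  ext d
  simp only [coeff_weightedHomogeneousComponent, coeff_mul]
  split_ifs with hd
  · refine Finset.sum_congr rfl fun uv huv => ?_
    rw [Finset.HasAntidiagonal.mem_antidiagonal] at huv
    by_cases hu : uv.1 ∈ φ.support
    · by_cases hv : uv.2 ∈ ψ.support
      · obtain ⟨hu', hv'⟩ := h _ hu _ hv (by rw [← map_add, huv, hd])
        simp [hu', hv']
      · simp [notMem_support_iff.mp hv]
    · simp [notMem_support_iff.mp hu]
  · refine (Finset.sum_eq_zero fun uv huv => ?_).symm
    rw [Finset.HasAntidiagonal.mem_antidiagonal] at huv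
    split_ifs with hu hv
    · exact absurd (by rw [← huv, map_add, hu, hv]) hd
    all_goals simp

theorem weightedHomogeneousComponent_ne_zero {φ : MvPolynomial σ R} {u : σ →₀ ℕ}
    (hu : u ∈ φ.support) : weightedHomogeneousComponent w (Finsupp.weight w u) φ ≠ 0 := by
  classical
  refine ne_of_apply_ne (coeff u) ?_
  rwa [coeff_weightedHomogeneousComponent, if_pos rfl, coeff_zero, ← mem_support_iff]

variable [IsDomain R] [LinearOrder M] [IsOrderedCancelAddMonoid M]

theorem IsWeightedHomogeneous.exists_of_mul {φ ψ : MvPolynomial σ R} {n : M}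
    (hφ : φ ≠ 0) (hψ : ψ ≠ 0) (h : IsWeightedHomogeneous w (φ * ψ) n) :
    ∃ a b, a + b = n ∧ IsWeightedHomogeneous w φ a ∧ IsWeightedHomogeneous w ψ b := by
  classical
  set A := φ.support.image (Finsupp.weight w)
  set B := ψ.support.image (Finsupp.weight w)
  have hA : A.Nonempty := (support_nonempty.mpr hφ).image _
  have hB : B.Nonempty := (support_nonempty.mpr hψ).image _
  have add_eq {a b} (ha : a ∈ A) (hb : b ∈ B)
      (hab : ∀ u ∈ φ.support, ∀ v ∈ ψ.support, Finsupp.weight w u + Finsupp.weight w v = a + b →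
        Finsupp.weight w u = a ∧ Finsupp.weight w v = b) :
      a + b = n := by
    obtain ⟨u, hu, rfl⟩ := Finset.mem_image.mp ha
    obtain ⟨v, hv, rfl⟩ := Finset.mem_image.mp hb
    by_contra hne
    have := h.weightedHomogeneousComponent_ne _ hne
    rw [weightedHomogeneousComponent_add_mul hab] at this
    exact mul_ne_zero (weightedHomogeneousComponent_ne_zero hu)
      (weightedHomogeneousComponent_ne_zero hv) this
  have hmax : A.max' hA + B.max' hB = n :=
    add_eq (A.max'_mem hA) (B.max'_mem hB) fun u hu v hv =>
      (add_eq_add_iff_eq_and_eq (A.le_max' _ (Finset.mem_image_of_mem _ hu))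
        (B.le_max' _ (Finset.mem_image_of_mem _ hv))).mp
  have hmin : A.min' hA + B.min' hB = n :=
    add_eq (A.min'_mem hA) (B.min'_mem hB) fun u hu v hv huv =>
      ((add_eq_add_iff_eq_and_eq (A.min'_le _ (Finset.mem_image_of_mem _ hu))
        (B.min'_le _ (Finset.mem_image_of_mem _ hv))).mp huv.symm).imp Eq.symm Eq.symm
  have hAB := (add_eq_add_iff_eq_and_eq (A.min'_le_max' hA) (B.min'_le_max' hB)).mp
    (hmin.trans hmax.symm)
  refine ⟨_, _, hmax, fun u hu => ?_, fun v hv => ?_⟩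
  · have hu := Finset.mem_image_of_mem (Finsupp.weight w) (mem_support_iff.mpr hu)
    exact le_antisymm (A.le_max' _ hu) (hAB.1 ▸ A.min'_le _ hu)
  · have hv := Finset.mem_image_of_mem (Finsupp.weight w) (mem_support_iff.mpr hv)
    exact le_antisymm (B.le_max' _ hv) (hAB.2 ▸ B.min'_le _ hv)

end WeightedHomogeneous

theorem polynomial_eval_aeval {τ k : Type*} [Field k] (f : MvPolynomial τ k)
    (v : τ → Polynomial k) (t : k) :
    (aeval v f).eval t = eval (fun i => (v i).eval t) f :=
  comp_aeval_apply v (Polynomial.aeval t) f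

theorem exists_ne_zero_eval_eq_zero_of_eval_smul {k : Type*} [Field k] [IsAlgClosed k]
    (f : MvPolynomial (Fin 2) k) {D : ℕ} (hD : D ≠ 0)
    (hf : ∀ l a b : k, eval ![l * a, l * b] f = l ^ D * eval ![a, b] f) :
    ∃ a b : k, (a, b) ≠ (0, 0) ∧ eval ![a, b] f = 0 := by
  obtain ⟨T, hT⟩ : ∃ T : Polynomial k, ∀ t, T.eval t = eval ![t, 1] f :=
    ⟨aeval ![Polynomial.X, 1] f, fun t => by
      rw [polynomial_eval_aeval]; congr 2; funext i; fin_cases i <;> simp⟩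
  obtain ⟨S, hS⟩ : ∃ S : Polynomial k, ∀ t, S.eval t = eval ![1, t] f :=
    ⟨aeval ![1, Polynomial.X] f, fun t => by
      rw [polynomial_eval_aeval]; congr 2; funext i; fin_cases i <;> simp⟩
  by_cases hdeg : T.degree ≤ 0
  · obtain ⟨c, hc⟩ : ∃ c, T = Polynomial.C c := ⟨_, Polynomial.eq_C_of_degree_le_zero hdeg⟩
    -- `f (1, t) = t ^ D f (1 / t, 1) = c t ^ D` for `t ≠ 0`, hence `f (1, 0) = 0`.
    have hSX : S = Polynomial.C c * Polynomial.X ^ D := by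
      refine Polynomial.eq_of_infinite_eval_eq _ _
        ((Set.finite_singleton (0 : k)).infinite_compl.mono fun t (ht : t ≠ 0) => ?_)
      have := hf t t⁻¹ 1
      rw [mul_inv_cancel₀ ht, mul_one] at this
      rw [Set.mem_ofPred_eq, hS, this, ← hT, hc]
      simp only [Polynomial.eval_C, Polynomial.eval_mul, Polynomial.eval_pow, Polynomial.eval_X]
      ring
    refine ⟨1, 0, by simp, ?_⟩
    rw [← hS, hSX]
    simp [hD]
  · obtain ⟨t, ht⟩ := IsAlgClosed.exists_root T fun h => hdeg h.le
    exact ⟨t, 1, by simp, by rw [← hT]; exact ht⟩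

end MvPolynomial

namespace RingTheory.Sequence

theorem isRegular_pair_of_isRelPrime {R : Type*} [CommRing R] [IsDomain R]
    [DecompositionMonoid R] {x y : R} (hx : x ≠ 0) (hxy : IsRelPrime x y)
    (hI : Ideal.span {x, y} ≠ ⊤) : IsRegular R [x, y] := by
  refine (isRegular_iff R _).mpr
    ⟨.cons (IsRegular.of_ne_zero hx).left.isSMulRegular (.cons ?_ (.nil _ _)), ?_⟩
  · refine (isSMulRegular_quotient_iff_mem_of_smul_mem _ y).mpr fun z hz => ?_
    rw [← Submodule.ideal_span_singleton_smul, Ideal.smul_top_eq_map, Algebra.algebraMap_self,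
      Ideal.map_id] at hz ⊢
    simp only [Submodule.restrictScalars_mem, Ideal.mem_span_singleton, smul_eq_mul] at hz ⊢
    exact hxy.dvd_of_dvd_mul_left hz
  · rw [Ideal.smul_top_eq_map, Algebra.algebraMap_self, Ideal.map_id]
    simpa [Ideal.span_insert] using hI.symm

end RingTheory.Sequence

namespace Submodule

theorem exists_mem_span_le_span_insert_range {K V : Type*} [Field K] [AddCommGroup V]
    [Module K V] {s : Finset V} {n : ℕ} (hs : s.Nonempty) (hcard : s.card ≤ n + 1)
    {q : Fin n → V} (hq : LinearIndependent K q) (hqs : ∀ i, q i ∈ span K (s : Set V)) :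
    ∃ x ∈ s, span K (s : Set V) ≤ span K (insert x (Set.range q)) := by
  by_cases hsq : (s : Set V) ⊆ span K (Set.range q)
  · obtain ⟨x, hx⟩ := hs
    exact ⟨x, hx, span_le.mpr (hsq.trans (span_mono (Set.subset_insert _ _)))⟩
  obtain ⟨x, hxs, hx⟩ := Set.not_subset.mp hsq
  refine ⟨x, hxs, (eq_of_le_of_finrank_le ?_ ?_).ge⟩
  · exact span_le.mpr (Set.insert_subset (subset_span hxs) (Set.range_subset_iff.mpr hqs))
  · have hxq : LinearIndependent K (Fin.cons x q : Fin (n + 1) → V) :=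
      linearIndependent_finCons.mpr ⟨hq, hx⟩
    calc Module.finrank K (span K (s : Set V)) ≤ s.card := finrank_span_finset_le_card s
      _ ≤ n + 1 := hcard
      _ = Module.finrank K (span K (insert x (Set.range q))) := by
        rw [← Fin.range_cons, finrank_span_eq_card hxq, Fintype.card_fin]

end Submodule

namespace Bihom

def wtXY : Fin 4 → ℕ := ![1, 1, 0, 0]
def wtZW : Fin 4 → ℕ := ![0, 0, 1, 1]

variable {k : Type*} [Field k]

theorem weight_bidegWt (e : Fin 4 →₀ ℕ) :
    Finsupp.weight bidegWt e = (((e 0 + e 1 : ℕ) : ℤ), ((e 2 + e 3 : ℕ) : ℤ)) := by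
  simp [Finsupp.weight_apply, Finsupp.sum_fintype, Fin.sum_univ_four, bidegWt, Prod.ext_iff]

theorem weight_wtXY (e : Fin 4 →₀ ℕ) : Finsupp.weight wtXY e = e 0 + e 1 := by
  simp [Finsupp.weight_apply, Finsupp.sum_fintype, Fin.sum_univ_four, wtXY]

theorem weight_wtZW (e : Fin 4 →₀ ℕ) : Finsupp.weight wtZW e = e 2 + e 3 := by
  simp [Finsupp.weight_apply, Finsupp.sum_fintype, Fin.sum_univ_four, wtZW]

theorem bihom_iff {p : Rk k} {m n : ℕ} :
    Bihom p m n ↔ p.IsWeightedHomogeneous wtXY m ∧ p.IsWeightedHomogeneous wtZW n := by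
  simp only [Bihom, IsWeightedHomogeneous, weight_bidegWt, weight_wtXY, weight_wtZW,
    Prod.mk.injEq, Nat.cast_inj]
  exact ⟨fun h => ⟨fun e he => (h he).1, fun e he => (h he).2⟩, fun h e he => ⟨h.1 he, h.2 he⟩⟩


theorem exponent_sums_eq {p : Rk k} {m n : ℕ} (hp : Bihom p m n) {e : Fin 4 →₀ ℕ}
    (he : e ∈ p.support) : e 0 + e 1 = m ∧ e 2 + e 3 = n := by
  rw [bihom_iff] at hp
  exact ⟨weight_wtXY e ▸ hp.1 (mem_support_iff.mp he), weight_wtZW e ▸ hp.2 (mem_support_iff.mp he)⟩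

theorem eval_smul {p : Rk k} {m n : ℕ} (hp : Bihom p m n) (l μ a b c d : k) :
    eval ![l * a, l * b, μ * c, μ * d] p = l ^ m * μ ^ n * eval ![a, b, c, d] p := by
  rw [eval_eq', eval_eq', Finset.mul_sum]
  refine Finset.sum_congr rfl fun e he => ?_
  obtain ⟨hm, hn⟩ := hp.exponent_sums_eq he
  simp only [Fin.prod_univ_four, Matrix.cons_val_zero, Matrix.cons_val_one, Matrix.cons_val_two,
    Matrix.cons_val_three, Matrix.head_cons, Matrix.tail_cons]
  rw [← hm, ← hn]
  ring

theorem eval_eq_mul_add_mul {p : Rk k} {m : ℕ} (hp : Bihom p m 1) (a b c d : k) :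
    eval ![a, b, c, d] p = c * eval ![a, b, 1, 0] p + d * eval ![a, b, 0, 1] p := by
  rw [eval_eq', eval_eq', eval_eq', Finset.mul_sum, Finset.mul_sum, ← Finset.sum_add_distrib]
  refine Finset.sum_congr rfl fun e he => ?_
  have hn : e 2 + e 3 = 1 := (hp.exponent_sums_eq (n := 1) he).2
  simp only [Fin.prod_univ_four, Matrix.cons_val_zero, Matrix.cons_val_one, Matrix.cons_val_two,
    Matrix.cons_val_three, Matrix.head_cons, Matrix.tail_cons]
  obtain ⟨h2, h3⟩ | ⟨h2, h3⟩ : (e 2 = 1 ∧ e 3 = 0) ∨ (e 2 = 0 ∧ e 3 = 1) := by omega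
  all_goals rw [h2, h3]; ring

theorem exists_eval_eq_zero {p : Rk k} {m : ℕ} (hp : Bihom p m 1) (a b : k) :
    ∃ c d : k, (c, d) ≠ (0, 0) ∧ eval ![a, b, c, d] p = 0 := by
  by_cases h : (eval ![a, b, 0, 1] p, -eval ![a, b, 1, 0] p) = (0, 0)
  · simp only [Prod.mk.injEq, neg_eq_zero] at h
    exact ⟨1, 0, by simp, by rw [hp.eval_eq_mul_add_mul, h.1, h.2]; ring⟩
  · exact ⟨_, _, h, by rw [hp.eval_eq_mul_add_mul]; ring⟩


def specializeZW (c d : k) : Rk k →ₐ[k] MvPolynomial (Fin 2) k := aeval ![X 0, X 1, C c, C d]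

theorem eval_specializeZW (p : Rk k) (a b c d : k) :
    eval ![a, b] (specializeZW c d p) = eval ![a, b, c, d] p := by
  change aeval ![a, b] (aeval _ p) = aeval ![a, b, c, d] p
  rw [comp_aeval_apply]
  congr 2
  funext i
  fin_cases i <;> simp

theorem exists_common_zero [IsAlgClosed k] {r q : Rk k} {m n d : ℕ} (hr : Bihom r m n)
    (hq : Bihom q d 1) (hn : n ≤ 1) (hmn : m + n ≠ 0) (hd : d ≠ 0) :
    ∃ a b c e : k, (a, b) ≠ (0, 0) ∧ (c, e) ≠ (0, 0) ∧
      eval ![a, b, c, e] r = 0 ∧ eval ![a, b, c, e] q = 0 := by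
  obtain rfl | rfl : n = 0 ∨ n = 1 := by omega
  · have hr0 (a b c e : k) : eval ![a, b, c, e] r = eval ![a, b, 0, 0] r := by
      simpa using (hr.eval_smul 1 0 a b c e).symm
    obtain ⟨a, b, hab, hf⟩ := exists_ne_zero_eval_eq_zero_of_eval_smul (specializeZW 0 0 r)
      (D := m) (by omega) fun l a b => by
        simpa only [eval_specializeZW, mul_zero, one_pow, mul_one]
          using hr.eval_smul l 1 a b 0 0
    obtain ⟨c, e, hce, hq0⟩ := hq.exists_eval_eq_zero a b
    exact ⟨a, b, c, e, hab, hce, by rw [hr0, ← eval_specializeZW, hf], hq0⟩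
  · have hsc {p : Rk k} {i : ℕ} (hp : Bihom p i 1) (l a b c e : k) :
        eval ![l * a, l * b, c, e] p = l ^ i * eval ![a, b, c, e] p := by
      simpa using hp.eval_smul l 1 a b c e
    obtain ⟨a, b, hab, hF⟩ := exists_ne_zero_eval_eq_zero_of_eval_smul
      (specializeZW 1 0 r * specializeZW 0 1 q -
        specializeZW 0 1 r * specializeZW 1 0 q)
      (D := m + d) (by omega) fun l a b => by
        simp only [map_sub, map_mul, eval_specializeZW, hsc hr, hsc hq]
        ring
    simp only [map_sub, map_mul, eval_specializeZW] at hF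
    -- `hF` says that the linear forms `r (a, b, ·)` and `q (a, b, ·)` are linearly dependent.
    by_cases h0 : (eval ![a, b, 0, 1] r, -eval ![a, b, 1, 0] r) = (0, 0)
    · simp only [Prod.mk.injEq, neg_eq_zero] at h0
      obtain ⟨c, e, hce, hq0⟩ := hq.exists_eval_eq_zero a b
      exact ⟨a, b, c, e, hab, hce, by rw [hr.eval_eq_mul_add_mul, h0.1, h0.2]; ring, hq0⟩
    · refine ⟨a, b, _, _, hab, h0, by rw [hr.eval_eq_mul_add_mul]; ring, ?_⟩
      rw [hq.eval_eq_mul_add_mul]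
      linear_combination -hF

theorem exists_of_dvd {q r : Rk k} {m n : ℕ} (hq : Bihom q m n) (hq0 : q ≠ 0) (hrq : r ∣ q) :
    ∃ i ≤ m, ∃ j ≤ n, Bihom r i j := by
  obtain ⟨s, rfl⟩ := hrq
  rw [bihom_iff] at hq
  obtain ⟨i, i', hii', hri, -⟩ :=
    hq.1.exists_of_mul (left_ne_zero_of_mul hq0) (right_ne_zero_of_mul hq0)
  obtain ⟨j, j', hjj', hrj, -⟩ :=
    hq.2.exists_of_mul (left_ne_zero_of_mul hq0) (right_ne_zero_of_mul hq0)
  exact ⟨i, by omega, j, by omega, bihom_iff.mpr ⟨hri, hrj⟩⟩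

theorem isUnit {r : Rk k} (hr : Bihom r 0 0) (hr0 : r ≠ 0) : IsUnit r := by
  have hrC : r = C (coeff 0 r) := by
    ext e
    rw [coeff_C]
    split_ifs with he
    · rw [he]
    · by_contra hne
      obtain ⟨h01, h23⟩ := hr.exponent_sums_eq (m := 0) (n := 0) (mem_support_iff.mpr hne)
      exact he (by ext i; fin_cases i <;> simp <;> omega)
  rw [hrC] at hr0 ⊢
  exact (Ne.isUnit fun h => hr0 (by rw [h, map_zero])).map C

theorem of_mem_span {s : Set (Rk k)} {m n : ℤ} (hs : ∀ p ∈ s, Bihom p m n) {p : Rk k}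
    (hp : p ∈ Submodule.span k s) : Bihom p m n :=
  (Submodule.span_le (p := weightedHomogeneousSubmodule k bidegWt (m, n))).mpr hs hp

theorem constantCoeff_eq_zero {p : Rk k} {m n : ℤ} (hp : Bihom p m n) (hmn : (m, n) ≠ 0) :
    constantCoeff p = 0 := by
  rw [constantCoeff_eq]
  exact hp.coeff_eq_zero 0 (by rwa [map_zero, ne_comm])

end Bihom

open Submodule in
theorem NoCommonZeros.isUnit_of_dvd_of_dvd {k : Type*} [Field k] [IsAlgClosed k]
    {p0 p1 p2 : Rk k} (hncz : NoCommonZeros p0 p1 p2) {d : ℕ} (hd : d ≠ 0)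
    (hp : ∀ p ∈ ({p0, p1, p2} : Set (Rk k)), Bihom p d 1) {q1 q2 : Rk k}
    (hq1 : q1 ∈ span k {p0, p1, p2}) (hq2 : q2 ∈ span k {p0, p1, p2})
    (hli : LinearIndependent k ![q1, q2]) {r : Rk k} (hr1 : r ∣ q1) (hr2 : r ∣ q2) :
    IsUnit r := by
  classical
  by_contra hr
  have hq10 : q1 ≠ 0 := by simpa using hli.ne_zero 0
  obtain ⟨i, -, j, hj, hrij⟩ := (Bihom.of_mem_span hp hq1).exists_of_dvd hq10 hr1
  have hij : i + j ≠ 0 := fun h => by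
    obtain ⟨rfl, rfl⟩ : i = 0 ∧ j = 0 := by omega
    exact hr (hrij.isUnit (ne_zero_of_dvd_ne_zero hq10 hr1))
  obtain ⟨q3, hq3, hspan⟩ := exists_mem_span_le_span_insert_range (K := k)
    (s := {p0, p1, p2}) (Finset.insert_nonempty _ _) Finset.card_le_three hli
    (by simpa [Fin.forall_fin_two] using ⟨hq1, hq2⟩)
  obtain ⟨a, b, c, e, hab, hce, hr0, hq30⟩ :=
    hrij.exists_common_zero (hp q3 (by simpa using hq3)) hj hij hd
  have hdvd {q : Rk k} (hq : r ∣ q) : eval ![a, b, c, e] q = 0 :=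
    zero_dvd_iff.mp (hr0 ▸ map_dvd (eval ![a, b, c, e]) hq)
  have hker : span k {p0, p1, p2} ≤ LinearMap.ker (aeval ![a, b, c, e]).toLinearMap := by
    have hspan' : span k {p0, p1, p2} ≤ span k {q3, q2, q1} := by
      simpa using hspan
    refine hspan'.trans (span_le.mpr ?_)
    rintro x (rfl | rfl | rfl)
    · exact hq30
    · exact hdvd hr2
    · exact hdvd hr1
  have hp0 := hker (subset_span (Set.mem_insert _ _))
  have hp1 := hker (subset_span (Set.mem_insert_of_mem _ (Set.mem_insert _ _)))
  have hp2 := hker (subset_span (Set.mem_insert_of_mem _ (Set.mem_insert_of_mem _ rfl)))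
  rcases hncz a b c e hab hce with h | h | h
  exacts [h hp0, h hp1, h hp2]

/-- Any two `k`-linearly independent elements of the span of
`{p0, p1, p2}` have no common non-constant factor, and form a regular sequence in `R`. -/
theorem statement13 {k : Type*} [Field k] [IsAlgClosed k] (p0 p1 p2 : Rk k)
    (h0 : Bihom p0 2 1) (h1 : Bihom p1 2 1) (h2 : Bihom p2 2 1)
    (hncz : NoCommonZeros p0 p1 p2) :
    ∀ q1 q2 : Rk k,
      q1 ∈ Submodule.span k ({p0, p1, p2} : Set (Rk k)) →
      q2 ∈ Submodule.span k ({p0, p1, p2} : Set (Rk k)) →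
      LinearIndependent k ![q1, q2] →
        (∀ r : Rk k, r ∣ q1 → r ∣ q2 → IsUnit r) ∧
        RingTheory.Sequence.IsRegular (Rk k) [q1, q2] := by
  intro q1 q2 hq1 hq2 hli
  have hp : ∀ p ∈ ({p0, p1, p2} : Set (Rk k)), Bihom p (2 : ℕ) 1 := by
    rintro p (rfl | rfl | rfl) <;> assumption
  have hcop : IsRelPrime q1 q2 := fun r =>
    hncz.isUnit_of_dvd_of_dvd two_ne_zero hp hq1 hq2 hli
  refine ⟨hcop, RingTheory.Sequence.isRegular_pair_of_isRelPrime (by simpa using hli.ne_zero 0)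
    hcop ?_⟩
  have hker {q : Rk k} (hq : q ∈ Submodule.span k {p0, p1, p2}) :
      q ∈ RingHom.ker (constantCoeff : Rk k →+* k) :=
    (Bihom.of_mem_span hp hq).constantCoeff_eq_zero (by simp)
  refine ne_top_of_le_ne_top (RingHom.ker_ne_top (constantCoeff : Rk k →+* k))
    (Ideal.span_le.mpr ?_)
  rintro q (rfl | rfl)
  exacts [hker hq1, hker hq2]
end
end

section
/- Let p0, p1, p2 ∈ R_{2,1} have no common zeros on P^1 × P^1, be generic, and suppose p0, p1 form a regular sequence in R. With k1, k2, g defined from p0, p1 as follows — writing p_i = C_i(z,w) x^2 + D_i(z,w) xy + E_i(z,w) y^2 and p_i = A_i(x,y) z + B_i(x,y) w, set k1 := (C0 x + D0 y) E1 − (C1 x + D1 y) E0, k2 := C0 (D1 x + E1 y) − C1 (D0 x + E0 y), g := A0 B1 − A1 B0 — and K := ⟨p0, p1, k1, k2⟩, the ideal quotient (K : g) equals the ideal ⟨z, w⟩. -/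
open MvPolynomial

noncomputable section

section Aux

open Pointwise

variable {k : Type*} [Field k]

lemma snd_weight (d : Fin 4 →₀ ℕ) : (Finsupp.weight bidegWt d).2 = d 2 + d 3 := by
  rw [Finsupp.weight_apply, Finsupp.sum_fintype]
  · simp [Fin.sum_univ_four, bidegWt]
  · intro i; simp

lemma span_pair_eq_image :
    (Ideal.span {X 2, X 3} : Ideal (Rk k)) =
      Ideal.span (MvPolynomial.X '' ({2, 3} : Set (Fin 4))) := by
  rw [Set.image_insert_eq, Set.image_singleton]

lemma mem_J_of_bihom01 {p : Rk k} (h : Bihom p 0 1) :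
    p ∈ Ideal.span ({X 2, X 3} : Set (Rk k)) := by
  rw [span_pair_eq_image, mem_ideal_span_X_image]
  intro m hm
  have hw := h (mem_support_iff.mp hm)
  have h2 : ((m 2 : ℤ) + m 3 : ℤ) = 1 := by
    have := congrArg Prod.snd hw
    rwa [snd_weight] at this
  by_contra hc
  push_neg at hc
  have h2' : m 2 = 0 := by simpa using hc 2 (by simp)
  have h3' : m 3 = 0 := by simpa using hc 3 (by simp)
  rw [h2', h3'] at h2; simp at h2

lemma eq_zero_of_bihom_n0 {p : Rk k} {m : ℤ} (h : Bihom p m 0)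
    (hm : p ∈ Ideal.span ({X 2, X 3} : Set (Rk k))) : p = 0 := by
  rw [span_pair_eq_image, mem_ideal_span_X_image] at hm
  rw [← support_eq_empty, Finset.eq_empty_iff_forall_notMem]
  intro d hd
  have hw := h (mem_support_iff.mp hd)
  have h2 : ((d 2 : ℤ) + d 3 : ℤ) = 0 := by
    have := congrArg Prod.snd hw
    rwa [snd_weight] at this
  obtain ⟨i, hi, hne⟩ := hm d hd
  have h2' : d 2 = 0 ∧ d 3 = 0 := by constructor <;> omega
  simp only [Set.mem_insert_iff, Set.mem_singleton_iff] at hi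
  rcases hi with rfl | rfl
  · exact hne h2'.1
  · exact hne h2'.2

/-- The substitution `z, w ↦ 0`. -/
def phiZW (k : Type*) [Field k] : Rk k →ₐ[k] Rk k := aeval ![X 0, X 1, 0, 0]

set_option linter.unreachableTactic false in
set_option linter.unusedTactic false in
lemma sub_phiZW_mem (p : Rk k) :
    p - phiZW k p ∈ Ideal.span ({X 2, X 3} : Set (Rk k)) := by
  induction p using MvPolynomial.induction_on with
  | C a => simp [phiZW]
  | add p q hp hq =>
      have := Ideal.add_mem _ hp hq
      convert this using 1; ring_nf; simp [map_add]; ring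
  | mul_X p i hp =>
      have h1 : p * X i - phiZW k (p * X i) =
          (p - phiZW k p) * X i + phiZW k p * (X i - phiZW k (X i)) := by
        rw [map_mul]; ring
      rw [h1]
      refine Ideal.add_mem _ (Ideal.mul_mem_right _ _ hp) (Ideal.mul_mem_left _ _ ?_)
      fin_cases i <;> simp [phiZW] <;>
        first
          | exact Ideal.subset_span (by simp)
          | exact Ideal.zero_mem _

lemma mem_span_iff_phiZW (p : Rk k) :
    p ∈ Ideal.span ({X 2, X 3} : Set (Rk k)) ↔ phiZW k p = 0 := by
  constructor
  · intro hp
    obtain ⟨c, d, hcd⟩ := Ideal.mem_span_pair.mp hp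
    rw [← hcd]
    simp [phiZW]
  · intro hp
    have := sub_phiZW_mem (k := k) p
    rwa [hp, sub_zero] at this

lemma reg_extract (p0 p1 : Rk k) (hreg : RingTheory.Sequence.IsRegular (Rk k) [p0, p1]) :
    p0 ≠ 0 ∧ ∀ h : Rk k, h * p1 ∈ Ideal.span {p0} → h ∈ Ideal.span {p0} := by
  have hw := hreg.toIsWeaklyRegular
  rw [RingTheory.Sequence.isWeaklyRegular_cons_iff] at hw
  obtain ⟨h0, hw1⟩ := hw
  rw [RingTheory.Sequence.isWeaklyRegular_cons_iff] at hw1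
  obtain ⟨h1, -⟩ := hw1
  constructor
  · rintro rfl
    have : (1 : Rk k) = 0 := h0 (by simp : (0:Rk k) • (1:Rk k) = (0:Rk k) • (0:Rk k))
    simp at this
  · have hts : (p0 • ⊤ : Submodule (Rk k) (Rk k)) = Ideal.span {p0} := by
      rw [← Submodule.ideal_span_singleton_smul, smul_eq_mul, Ideal.mul_top]
    intro h hh
    have : p1 • (Submodule.Quotient.mk h : QuotSMulTop p0 (Rk k)) =
        p1 • (0 : QuotSMulTop p0 (Rk k)) := by
      rw [smul_zero, ← Submodule.Quotient.mk_smul, Submodule.Quotient.mk_eq_zero, hts]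
      simpa [smul_eq_mul, mul_comm] using hh
    have := h1 this
    rwa [Submodule.Quotient.mk_eq_zero, hts] at this

end Aux

/-- In the generic case, with `p0, p1` a regular sequence and
`K = ⟨p0, p1, k1, k2⟩` built from the explicit syzygy polynomials, the ideal quotient
`(K : g)` equals `⟨z, w⟩`. -/
theorem statement17 {k : Type*} [Field k] [IsAlgClosed k] (p0 p1 p2 : Rk k)
    (h0 : Bihom p0 2 1) (h1 : Bihom p1 2 1) (h2 : Bihom p2 2 1)
    (hncz : NoCommonZeros p0 p1 p2) (hgen : BidegGeneric p0 p1 p2)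
    (hreg : RingTheory.Sequence.IsRegular (Rk k) [p0, p1])
    (C0 D0 E0 C1 D1 E1 : Rk k)
    (hC0 : Bihom C0 0 1) (hD0 : Bihom D0 0 1) (hE0 : Bihom E0 0 1)
    (hC1 : Bihom C1 0 1) (hD1 : Bihom D1 0 1) (hE1 : Bihom E1 0 1)
    (hpC0 : p0 = C0 * X 0 ^ 2 + D0 * (X 0 * X 1) + E0 * X 1 ^ 2)
    (hpC1 : p1 = C1 * X 0 ^ 2 + D1 * (X 0 * X 1) + E1 * X 1 ^ 2)
    (A0 B0 A1 B1 : Rk k)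
    (hA0 : Bihom A0 2 0) (hB0 : Bihom B0 2 0) (hA1 : Bihom A1 2 0) (hB1 : Bihom B1 2 0)
    (hpA0 : p0 = A0 * X 2 + B0 * X 3)
    (hpA1 : p1 = A1 * X 2 + B1 * X 3) :
    Submodule.colon
        (Ideal.span ({p0, p1,
          (C0 * X 0 + D0 * X 1) * E1 - (C1 * X 0 + D1 * X 1) * E0,
          C0 * (D1 * X 0 + E1 * X 1) - C1 * (D0 * X 0 + E0 * X 1)} : Set (Rk k)))
        (Ideal.span ({A0 * B1 - A1 * B0} : Set (Rk k)))
      = Ideal.span ({X 2, X 3} : Set (Rk k)) := by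
  set J : Ideal (Rk k) := Ideal.span ({X 2, X 3} : Set (Rk k)) with hJ
  set g : Rk k := A0 * B1 - A1 * B0 with hg
  set K : Ideal (Rk k) := Ideal.span ({p0, p1,
      (C0 * X 0 + D0 * X 1) * E1 - (C1 * X 0 + D1 * X 1) * E0,
      C0 * (D1 * X 0 + E1 * X 1) - C1 * (D0 * X 0 + E0 * X 1)} : Set (Rk k)) with hK
  obtain ⟨hp0ne, hregq⟩ := reg_extract p0 p1 hreg
  have hp0K : p0 ∈ K := Ideal.subset_span (by simp)
  have hp1K : p1 ∈ K := Ideal.subset_span (by simp)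
  -- `p0, p1 ∈ J`
  have hp0J : p0 ∈ J := by
    rw [hpA0]
    exact add_mem (Ideal.mul_mem_left _ _ (Ideal.subset_span (by simp)))
      (Ideal.mul_mem_left _ _ (Ideal.subset_span (by simp)))
  have hp1J : p1 ∈ J := by
    rw [hpA1]
    exact add_mem (Ideal.mul_mem_left _ _ (Ideal.subset_span (by simp)))
      (Ideal.mul_mem_left _ _ (Ideal.subset_span (by simp)))
  -- `g ≠ 0`
  have hgne : g ≠ 0 := by
    intro hg0
    have e1 : A0 * p1 - A1 * p0 = g * X 3 := by rw [hpA0, hpA1, hg]; ring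
    have e2 : B0 * p1 - B1 * p0 = -(g * X 2) := by rw [hpA0, hpA1, hg]; ring
    rw [hg0, zero_mul] at e1
    rw [hg0, zero_mul, neg_zero] at e2
    have hA0mem : A0 ∈ Ideal.span {p0} := by
      refine hregq A0 ?_
      refine Ideal.mem_span_singleton.mpr ⟨A1, ?_⟩
      linear_combination e1
    have hB0mem : B0 ∈ Ideal.span {p0} := by
      refine hregq B0 ?_
      refine Ideal.mem_span_singleton.mpr ⟨B1, ?_⟩
      linear_combination e2
    have hA0J : A0 ∈ J := by
      obtain ⟨c, hc⟩ := Ideal.mem_span_singleton.mp hA0mem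
      rw [hJ, mem_span_iff_phiZW, hc, map_mul,
        (mem_span_iff_phiZW p0).mp hp0J, zero_mul]
    have hB0J : B0 ∈ J := by
      obtain ⟨c, hc⟩ := Ideal.mem_span_singleton.mp hB0mem
      rw [hJ, mem_span_iff_phiZW, hc, map_mul,
        (mem_span_iff_phiZW p0).mp hp0J, zero_mul]
    have hA00 : A0 = 0 := eq_zero_of_bihom_n0 hA0 hA0J
    have hB00 : B0 = 0 := eq_zero_of_bihom_n0 hB0 hB0J
    apply hp0ne
    rw [hpA0, hA00, hB00]; ring
  apply le_antisymm
  · -- (K : g) ≤ J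
    intro a ha
    have hag : a * g ∈ K := Ideal.mem_colon_span_singleton.mp ha
    have hKJ : K ≤ J := by
      rw [hK, Ideal.span_le]
      rintro q hq
      simp only [Set.mem_insert_iff, Set.mem_singleton_iff] at hq
      rcases hq with rfl | rfl | rfl | rfl
      · exact hp0J
      · exact hp1J
      · exact sub_mem (Ideal.mul_mem_left _ _ (mem_J_of_bihom01 hE1))
          (Ideal.mul_mem_left _ _ (mem_J_of_bihom01 hE0))
      · exact sub_mem (Ideal.mul_mem_right _ _ (mem_J_of_bihom01 hC0))
          (Ideal.mul_mem_right _ _ (mem_J_of_bihom01 hC1))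
    have hagJ : a * g ∈ J := hKJ hag
    rw [hJ, mem_span_iff_phiZW, map_mul] at hagJ
    have hgJ : phiZW k g ≠ 0 := by
      intro h
      apply hgne
      refine eq_zero_of_bihom_n0 (m := 4) ?_ ((mem_span_iff_phiZW g).mpr h)
      have h01 := hA0.mul hB1
      have h10 := hA1.mul hB0
      have he : ((2 : ℤ), (0 : ℤ)) + (2, 0) = ((4 : ℤ), (0 : ℤ)) := by norm_num
      rw [he] at h01 h10
      have : g ∈ weightedHomogeneousSubmodule k bidegWt ((4 : ℤ), (0 : ℤ)) :=
        sub_mem (by exact h01) (by exact h10)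
      exact this
    have : phiZW k a = 0 := by
      rcases mul_eq_zero.mp hagJ with h | h
      · exact h
      · exact absurd h hgJ
    exact (mem_span_iff_phiZW a).mpr this
  · -- J ≤ (K : g)
    rw [hJ, Ideal.span_le]
    rintro q hq
    simp only [Set.mem_insert_iff, Set.mem_singleton_iff] at hq
    rcases hq with rfl | rfl
    · refine Ideal.mem_colon_span_singleton.mpr ?_
      have hid : X 2 * g = B1 * p0 - B0 * p1 := by rw [hpA0, hpA1, hg]; ring
      rw [hid]
      exact sub_mem (Ideal.mul_mem_left _ _ hp0K) (Ideal.mul_mem_left _ _ hp1K)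
    · refine Ideal.mem_colon_span_singleton.mpr ?_
      have hid : X 3 * g = A0 * p1 - A1 * p0 := by rw [hpA0, hpA1, hg]; ring
      rw [hid]
      exact sub_mem (Ideal.mul_mem_left _ _ hp1K) (Ideal.mul_mem_left _ _ hp0K)
end
end
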